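/- The word t^ω(0), the fixed point of the morphism t given by t(0) = 01120, t(1) = 12001, t(2) = 2, is obtained from the Thue–Morse word (the fixed point of 0 ↦ 01, 1 ↦ 10) by inserting the letter 2 in the middle of every occurrence of the factor 10. -/
import Mathlib

open List

/-- `v` occurs in the infinite word `w` at position `i`. -/
def FactorAt {A : Type} (v : List A) (w : ℕ → A) (i : ℕ) : Prop :=
  v = (List.range v.length).map fun k => w (i + k)

/-- `v` is a (finite) factor of the infinite word `w`. -/
def IsFactorInf {A : Type} (v : List A) (w : ℕ → A) : Prop :=
  ∃ i, FactorAt v w i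

/-- `v` is a (finite) factor of the bi-infinite word `w`. -/
def IsFactorBi {A : Type} (v : List A) (w : ℤ → A) : Prop :=
  ∃ i : ℤ, v = (List.range v.length).map fun k => w (i + k)

/-- `v` is a repetition with period `u`, i.e. `u ≠ ε` and `v` is a prefix of
`u^ω`; its exponent is `|v|/|u|`. -/
def IsRep {A : Type} (v u : List A) : Prop :=
  u ≠ [] ∧ v <+: (List.replicate v.length u).flatten

/-- The infinite word `w` is `β⁺`-free: every factor that is a repetition
with period `u` has exponent at most `β`. -/
def FreePlusInf {A : Type} (β : ℝ) (w : ℕ → A) : Prop :=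
  ∀ v u : List A, IsFactorInf v w → IsRep v u → (v.length : ℝ) ≤ β * u.length

/-- The infinite word `w` is `β`-free: every factor that is a repetition
with period `u` has exponent strictly less than `β`. -/
def FreeInf {A : Type} (β : ℝ) (w : ℕ → A) : Prop :=
  ∀ v u : List A, IsFactorInf v w → IsRep v u → (v.length : ℝ) < β * u.length

/-- The bi-infinite word `w` is `β⁺`-free. -/
def FreePlusBi {A : Type} (β : ℝ) (w : ℤ → A) : Prop :=
  ∀ v u : List A, IsFactorBi v w → IsRep v u → (v.length : ℝ) ≤ β * u.length

/-- The bi-infinite word `w` is `β`-free. -/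
def FreeBi {A : Type} (β : ℝ) (w : ℤ → A) : Prop :=
  ∀ v u : List A, IsFactorBi v w → IsRep v u → (v.length : ℝ) < β * u.length

/-- The finite word `w` is `β⁺`-free. -/
def FreePlusList {A : Type} (β : ℝ) (w : List A) : Prop :=
  ∀ v u : List A, v <:+: w → IsRep v u → (v.length : ℝ) ≤ β * u.length

/-- The infinite word `w` has at most `p` distinct palindromic factors
(including the empty word). -/
def AtMostPalInf {A : Type} (p : ℕ) (w : ℕ → A) : Prop :=
  ∃ S : Finset (List A), S.card ≤ p ∧ ∀ v, IsFactorInf v w → v.reverse = v → v ∈ S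

/-- The bi-infinite word `w` has at most `p` distinct palindromic factors
(including the empty word). -/
def AtMostPalBi {A : Type} (p : ℕ) (w : ℤ → A) : Prop :=
  ∃ S : Finset (List A), S.card ≤ p ∧ ∀ v, IsFactorBi v w → v.reverse = v → v ∈ S

/-- The finite word `w` has at most `p` distinct palindromic factors
(including the empty word). -/
def AtMostPalList {A : Type} (p : ℕ) (w : List A) : Prop :=
  ∃ S : Finset (List A), S.card ≤ p ∧ ∀ v, v <:+: w → v.reverse = v → v ∈ S

/-- The image of the infinite word `w` under the (non-erasing) morphism `f`,
extended letter by letter. -/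
def MorphImage {A B : Type} [Inhabited B] (f : A → List B) (w : ℕ → A) : ℕ → B :=
  fun n => (((List.range (n + 1)).map fun i => f (w i)).flatten).getD n default

/-- The morphism t : 0 ↦ 01120, 1 ↦ 12001, 2 ↦ 2. -/
def tMor : Fin 3 → List (Fin 3) :=
  ![[0, 1, 1, 2, 0], [1, 2, 0, 0, 1], [2]]

/-- The Thue–Morse morphism 0 ↦ 01, 1 ↦ 10. -/
def tmMor : Fin 2 → List (Fin 2) :=
  ![[0, 1], [1, 0]]

/-- Insert the letter 2 in the middle of every occurrence of the factor 10
in an infinite binary word (i.e. replace every occurrence of 10 by 120). -/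
def Insert2 (w : ℕ → Fin 2) : ℕ → Fin 3 :=
  fun n => (((List.range (n + 1)).map fun i =>
      if w i = 1 ∧ w (i + 1) = 0 then ([1, 2] : List (Fin 3))
      else [Fin.castLE (by norm_num) (w i)]).flatten).getD n 0

namespace Stmt8Aux

/-- The `i`-th block of `Insert2 v`. -/
def g (v : ℕ → Fin 2) (i : ℕ) : List (Fin 3) :=
  if v i = 1 ∧ v (i + 1) = 0 then ([1, 2] : List (Fin 3))
  else [Fin.castLE (by norm_num) (v i)]

/-- Prefix of `Insert2 v` given by the first `n` blocks. -/
def P (v : ℕ → Fin 2) (n : ℕ) : List (Fin 3) := ((List.range n).map (g v)).flatten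

lemma getD_pre {α : Type*} {l₁ l₂ : List α} (h : l₁ <+: l₂) {n : ℕ}
    (hn : n < l₁.length) (d : α) : l₂.getD n d = l₁.getD n d := by
  obtain ⟨t, rfl⟩ := h
  exact List.getD_append _ _ _ _ hn

lemma getD_flatten {α : Type*} (F : ℕ → List α) (d : α) {m i r : ℕ}
    (him : i < m) (hr : r < (F i).length) :
    (((range m).map F).flatten).getD ((((range i).map F).flatten).length + r) d
      = (F i).getD r d := by
  set L := (((range i).map F).flatten).length with hL
  have hlen : (((range (i+1)).map F).flatten).length = L + (F i).length := by
    rw [range_succ, map_append, flatten_append, length_append]; simp [hL, Function.comp]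
  have hm : m = (i + 1) + (m - (i + 1)) := by omega
  rw [hm, range_add, map_append, flatten_append,
      List.getD_append _ _ _ _ (by rw [hlen]; omega)]
  rw [range_succ, map_append, flatten_append,
      List.getD_append_right _ _ _ _ (by rw [← hL]; omega)]
  have e : L + r - ((map F (range i)).flatten).length = r := by rw [← hL]; omega
  rw [e]
  simp

lemma g_ne_nil (v : ℕ → Fin 2) (i : ℕ) : g v i ≠ [] := by
  unfold g; split <;> simp

lemma P_succ (v : ℕ → Fin 2) (n : ℕ) : P v (n + 1) = P v n ++ g v n := by
  unfold P; rw [range_succ, map_append, flatten_append]; simp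

lemma P_prefix (v : ℕ → Fin 2) {m n : ℕ} (h : m ≤ n) : P v m <+: P v n := by
  induction n, h using Nat.le_induction with
  | base => exact prefix_rfl
  | succ n hmn ih => rw [P_succ]; exact ih.trans (prefix_append _ _)

lemma P_len (v : ℕ → Fin 2) (n : ℕ) : n ≤ (P v n).length := by
  induction n with
  | zero => simp
  | succ n ih =>
    rw [P_succ, length_append]
    have := List.length_pos_iff.mpr (g_ne_nil v n)
    omega

lemma insert2_eq (v : ℕ → Fin 2) (n : ℕ) : Insert2 v n = (P v (n + 1)).getD n 0 := rfl

lemma hW (v : ℕ → Fin 2) {k m : ℕ} (hk : k < (P v m).length) :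
    Insert2 v k = (P v m).getD k 0 := by
  rw [insert2_eq]
  have h1 : k < (P v (k + 1)).length := lt_of_lt_of_le (Nat.lt_succ_self k) (P_len v (k + 1))
  rw [← getD_pre (P_prefix v (le_max_left (k+1) m)) h1 (0 : Fin 3),
      getD_pre (P_prefix v (le_max_right (k+1) m)) hk (0 : Fin 3)]

/-! ### Thue–Morse recurrences -/

lemma tm_len (v : ℕ → Fin 2) (n : ℕ) :
    (((range n).map fun i => tmMor (v i)).flatten).length = 2 * n := by
  induction n with
  | zero => simp
  | succ n ih =>
    rw [range_succ, map_append, flatten_append, length_append, ih]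
    have h : ∀ x : Fin 2, (tmMor x).length = 2 := by decide
    simp [h]; omega

lemma hv2 (v : ℕ → Fin 2) (hv : MorphImage tmMor v = v) (i : ℕ) :
    v (2 * i) = v i := by
  have h := congrFun hv (2 * i)
  rw [MorphImage] at h
  have hr : 0 < (tmMor (v i)).length := by
    have : ∀ x : Fin 2, (tmMor x).length = 2 := by decide
    rw [this]; omega
  have key := getD_flatten (fun j => tmMor (v j)) (default : Fin 2)
    (show i < 2 * i + 1 by omega) hr
  rw [tm_len] at key
  simp only [Nat.add_zero] at key
  rw [key] at h
  rw [← h]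
  have : ∀ x : Fin 2, (tmMor x).getD 0 default = x := by decide
  exact this (v i)

lemma hv21 (v : ℕ → Fin 2) (hv : MorphImage tmMor v = v) (i : ℕ) :
    v (2 * i + 1) = 1 - v i := by
  have h := congrFun hv (2 * i + 1)
  rw [MorphImage] at h
  have hr : 1 < (tmMor (v i)).length := by
    have : ∀ x : Fin 2, (tmMor x).length = 2 := by decide
    rw [this]; omega
  have key := getD_flatten (fun j => tmMor (v j)) (default : Fin 2)
    (show i < 2 * i + 1 + 1 by omega) hr
  rw [tm_len] at key
  rw [key] at h
  rw [← h]
  have : ∀ x : Fin 2, (tmMor x).getD 1 default = 1 - x := by decide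
  exact this (v i)

/-! ### The key commutation identity -/

lemma key (v : ℕ → Fin 2) (hv : MorphImage tmMor v = v) (m : ℕ) :
    ((g v m).map tMor).flatten
      = g v (4*m) ++ (g v (4*m+1) ++ (g v (4*m+1+1) ++ g v (4*m+1+1+1))) := by
  have w0 : v (4*m) = v m := by
    have e : 4*m = 2*(2*m) := by ring
    rw [e, hv2 v hv, hv2 v hv]
  have w1 : v (4*m+1) = 1 - v m := by
    have e : 4*m+1 = 2*(2*m)+1 := by ring
    rw [e, hv21 v hv, hv2 v hv]
  have w2 : v (4*m+1+1) = 1 - v m := by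
    have e : 4*m+1+1 = 2*(2*m+1) := by ring
    rw [e, hv2 v hv, hv21 v hv]
  have w3 : v (4*m+1+1+1) = v m := by
    have e : 4*m+1+1+1 = 2*(2*m+1)+1 := by ring
    rw [e, hv21 v hv, hv21 v hv]
    revert w0; have : ∀ x : Fin 2, 1 - (1 - x) = x := by decide
    intro _; exact this (v m)
  have w4 : v (4*m+1+1+1+1) = v (m+1) := by
    have e : 4*m+1+1+1+1 = 2*(2*(m+1)) := by ring
    rw [e, hv2 v hv, hv2 v hv]
  have hcase : ∀ x : Fin 2, x = 0 ∨ x = 1 := by decide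
  rcases hcase (v m) with hm | hm <;> rcases hcase (v (m+1)) with hm1 | hm1 <;>
    simp [g, w0, w1, w2, w3, w4, hm, hm1, tMor] <;> rfl

lemma flatten_tMor_P (v : ℕ → Fin 2) (hv : MorphImage tmMor v = v) (m : ℕ) :
    ((P v m).map tMor).flatten = P v (4 * m) := by
  induction m with
  | zero => simp [P]
  | succ m ih =>
    rw [P_succ, map_append, flatten_append, ih, key v hv m]
    have e : 4 * (m + 1) = (4*m+1+1+1)+1 := by ring
    rw [e, P_succ, P_succ, P_succ, P_succ]
    simp [List.append_assoc]

/-- The blocks of `MorphImage tMor (Insert2 v)`. -/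
def Q (v : ℕ → Fin 2) (N : ℕ) : List (Fin 3) :=
  ((range N).map fun k => tMor (Insert2 v k)).flatten

lemma tMor_ne_nil (x : Fin 3) : tMor x ≠ [] := by
  revert x; decide

lemma Q_succ (v : ℕ → Fin 2) (n : ℕ) : Q v (n + 1) = Q v n ++ tMor (Insert2 v n) := by
  unfold Q; rw [range_succ, map_append, flatten_append]; simp

lemma Q_prefix (v : ℕ → Fin 2) {m n : ℕ} (h : m ≤ n) : Q v m <+: Q v n := by
  induction n, h using Nat.le_induction with
  | base => exact prefix_rfl
  | succ n hmn ih => rw [Q_succ]; exact ih.trans (prefix_append _ _)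

lemma Q_len (v : ℕ → Fin 2) (n : ℕ) : n ≤ (Q v n).length := by
  induction n with
  | zero => simp [Q]
  | succ n ih =>
    rw [Q_succ, length_append]
    have := List.length_pos_iff.mpr (tMor_ne_nil (Insert2 v n))
    omega

lemma list_eq_range_getD {α : Type*} (l : List α) (d : α) :
    l = (range l.length).map fun k => l.getD k d := by
  apply List.ext_getElem
  · simp
  · intro i h1 h2
    simp [List.getD_eq_getElem, List.getElem?_eq_getElem h1]

lemma Q_eq (v : ℕ → Fin 2) (hv : MorphImage tmMor v = v) (m : ℕ) :
    Q v ((P v m).length) = P v (4 * m) := by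
  rw [← flatten_tMor_P v hv m]
  unfold Q
  congr 1
  conv_rhs => rw [list_eq_range_getD (P v m) 0, List.map_map]
  apply List.map_congr_left
  intro k hk
  rw [mem_range] at hk
  simp only [Function.comp]
  rw [hW v hk]

/-! ### `Insert2 v` is a fixed point of `tMor` -/

lemma insert2_fixed (v : ℕ → Fin 2) (hv : MorphImage tmMor v = v) :
    MorphImage tMor (Insert2 v) = Insert2 v := by
  funext n
  have hQ : MorphImage tMor (Insert2 v) n = (Q v (n + 1)).getD n 0 := rfl
  rw [hQ]
  have h1 : n < (Q v (n + 1)).length := lt_of_lt_of_le (Nat.lt_succ_self n) (Q_len v (n+1))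
  have h2 : n + 1 ≤ (P v (n + 1)).length := P_len v (n + 1)
  rw [← getD_pre (Q_prefix v h2) h1 (0 : Fin 3), Q_eq v hv (n + 1)]
  have h3 : n < (P v (4 * (n + 1))).length :=
    lt_of_lt_of_le (by omega) (P_len v (4 * (n + 1)))
  exact (hW v h3).symm

/-! ### Uniqueness of the fixed point of `tMor` starting with 0 -/

lemma lenT (a : ℕ → Fin 3) (ha0 : a 0 = 0) {n : ℕ} (hn : 1 ≤ n) :
    n + 4 ≤ (((range n).map fun i => tMor (a i)).flatten).length := by
  induction n, hn using Nat.le_induction with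
  | base =>
    have h : (range 1).map (fun i => tMor (a i)) = [tMor 0] := by rw [show range 1 = [0] from rfl]; simp [ha0]
    rw [h]; decide
  | succ n hn ih =>
    rw [range_succ, map_append, flatten_append, length_append]
    have := List.length_pos_iff.mpr (tMor_ne_nil (a n))
    simp only [map_cons, flatten_cons, map_nil, flatten_nil, append_nil, length_append] at *
    omega

lemma uniq (a b : ℕ → Fin 3) (ha : MorphImage tMor a = a) (ha0 : a 0 = 0)
    (hb : MorphImage tMor b = b) (hb0 : b 0 = 0) : a = b := by
  funext n
  induction n using Nat.strong_induction_on with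
  | _ n ih =>
    match n with
    | 0 => rw [ha0, hb0]
    | (m + 1) =>
      have hmap : ((range (m+1)).map fun i => tMor (a i))
          = ((range (m+1)).map fun i => tMor (b i)) := by
        apply List.map_congr_left
        intro i hi
        rw [mem_range] at hi
        rw [ih i (by omega)]
      have hlena := lenT a ha0 (show 1 ≤ m + 1 by omega)
      have ha' := congrFun ha (m + 1)
      have hb' := congrFun hb (m + 1)
      rw [MorphImage] at ha' hb'
      rw [← ha', ← hb']
      rw [range_succ, map_append, flatten_append, map_append, flatten_append,
          List.getD_append _ _ _ _ (by omega),
          List.getD_append _ _ _ _ (by rw [← hmap]; omega), hmap]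

end Stmt8Aux

/-- The fixed point `t^ω(0)` of t is obtained from the Thue–Morse word by
inserting the letter 2 in the middle of every occurrence of the factor 10. -/
theorem stmt8 (u : ℕ → Fin 3) (hu : MorphImage tMor u = u) (hu0 : u 0 = 0)
    (v : ℕ → Fin 2) (hv : MorphImage tmMor v = v) (hv0 : v 0 = 0) :
    u = Insert2 v := by
  have hw0 : Insert2 v 0 = 0 := by
    rw [Stmt8Aux.insert2_eq, Stmt8Aux.P_succ]
    simp [Stmt8Aux.P, Stmt8Aux.g, hv0]
  exact Stmt8Aux.uniq u (Insert2 v) hu hu0 (Stmt8Aux.insert2_fixed v hv) hw0
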